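/- Let Ω be an open bounded subset of ℝⁿ, g ∈ C^{α(·)}(D) for D ⊂ Ω open, x₀ ∈ D, 0 < μ ≤ 1/2, d = μ·d_{x₀} where d_{x₀} = dist(x₀, ∂D), and B = B(x₀, d). Then the weighted seminorm on B satisfies [g]^{(2)}_{0,α(·),B} ≤ 8 μ^{2+α⁻_D} [g]^{(2)}_{0,α(·),D}, where [g]^{(2)}_{0,α(·),S} = sup_{x≠y ∈ S} d_{x,y,S}^{α(x)+2} |g(x)−g(y)|/|x−y|^{α(x)} with d_{x,y,S} = min(dist(x,∂S), dist(y,∂S)). -/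

import Mathlib

/-!
A segment joining a point of a set to a point outside it crosses the frontier. Hence `B ⊆ D`, and
every point of `B` lies within `d` of `∂B`, while by the triangle inequality both points lie at
distance at least `d_{x₀}/2` from `∂D`. So the weight `d_{x,y,B}` is at most `2μ · d_{x,y,D}`,
and `(2μ)^{α(x)+2} ≤ 8 μ^{2+α⁻_D}` because `2 + α⁻_D ≤ α(x) + 2 ≤ 3`.
-/
open Real Set Metric

noncomputable section

/-- The set of values of the weighted quotients defining `[g]^{(2)}_{0,α(·),S}`,
with `d_{x,y,S} = min(dist(x,∂S), dist(y,∂S))`. -/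
def wSemiSet2 {n : ℕ} (S : Set (EuclideanSpace ℝ (Fin n)))
    (α g : EuclideanSpace ℝ (Fin n) → ℝ) : Set ℝ :=
  {r | ∃ x ∈ S, ∃ y ∈ S, x ≠ y ∧
    r = min (Metric.infDist x (frontier S)) (Metric.infDist y (frontier S)) ^ (α x + 2) *
        (|g x - g y| / ‖x - y‖ ^ α x)}

theorem IsPreconnected.inter_frontier_nonempty {X : Type*} [TopologicalSpace X] {s t : Set X}
    (hs : IsPreconnected s) (hst : (s ∩ t).Nonempty) (hst' : (s \ t).Nonempty) :
    (s ∩ frontier t).Nonempty := by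
  by_contra! h
  have hcover : s ⊆ interior t ∪ (closure t)ᶜ := by
    intro z hz
    by_cases hzi : z ∈ interior t
    · exact .inl hzi
    · exact .inr fun hzc => h.subset ⟨hz, hzc, hzi⟩
  obtain ⟨x, hxs, hxt⟩ := hst
  obtain ⟨y, hys, hyt⟩ := hst'
  obtain ⟨z, -, hzi, hzc⟩ := hs _ _ isOpen_interior isClosed_closure.isOpen_compl hcover
    ⟨x, hxs, (hcover hxs).resolve_right (· (subset_closure hxt))⟩
    ⟨y, hys, (hcover hys).resolve_left fun hyi => hyt (interior_subset hyi)⟩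
  exact hzc (interior_subset_closure hzi)

variable {E : Type*} [NormedAddCommGroup E] [NormedSpace ℝ E]

theorem infDist_frontier_le_dist_of_mem_of_notMem {s : Set E} {x y : E} (hx : x ∈ s)
    (hy : y ∉ s) : infDist x (frontier s) ≤ dist x y := by
  obtain ⟨z, hzxy, hzs⟩ := (convex_segment x y).isPreconnected.inter_frontier_nonempty
    ⟨x, left_mem_segment ℝ x y, hx⟩ ⟨y, right_mem_segment ℝ x y, hy⟩
  calc infDist x (frontier s) ≤ dist x z := infDist_le_dist_of_mem hzs
    _ ≤ dist x y := by linarith [dist_add_dist_of_mem_segment hzxy, dist_nonneg (x := z) (y := y)]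

theorem ball_infDist_frontier_subset {s : Set E} {x : E} (hx : x ∈ s) :
    ball x (infDist x (frontier s)) ⊆ s := fun y hy => by
  by_contra hys
  exact (mem_ball'.1 hy).not_ge (infDist_frontier_le_dist_of_mem_of_notMem hx hys)

theorem exists_notMem_ball_dist_eq [Nontrivial E] (x c : E) {r : ℝ} (hr : 0 ≤ r) :
    ∃ y ∉ ball c r, dist x y = r := by
  obtain ⟨v, hv⟩ := exists_norm_eq E hr
  -- `x + v` and `x - v` are `2r` apart, so one of them is at distance `≥ r` from `c`.
  have hsum : 2 * r ≤ dist (x + v) c + dist (x - v) c := by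
    calc 2 * r = dist (x + v) (x - v) := by
          rw [dist_eq_norm, add_sub_sub_cancel, ← two_smul ℝ v, norm_smul, hv]; norm_num
      _ ≤ dist (x + v) c + dist (x - v) c := dist_triangle_right _ _ _
  by_cases h : r ≤ dist (x + v) c
  · exact ⟨x + v, by simpa using h, by simp [hv]⟩
  · exact ⟨x - v, by simp only [mem_ball, not_lt]; linarith, by simp [hv]⟩

theorem infDist_frontier_ball_le [Nontrivial E] {x c : E} {r : ℝ} (hx : x ∈ ball c r) :
    infDist x (frontier (ball c r)) ≤ r := by
  obtain ⟨y, hy, hxy⟩ := exists_notMem_ball_dist_eq x c (dist_nonneg.trans (mem_ball.1 hx).le)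
  exact (infDist_frontier_le_dist_of_mem_of_notMem hx hy).trans hxy.le

theorem two_mul_rpow_le_eight_mul_rpow {μ a e : ℝ} (hμ0 : 0 < μ) (hμ1 : μ ≤ 1) (hae : a ≤ e)
    (he : e ≤ 3) : (2 * μ) ^ e ≤ 8 * μ ^ a := by
  rw [mul_rpow zero_le_two hμ0.le]
  have h2 : (2 : ℝ) ^ e ≤ 8 :=
    calc (2 : ℝ) ^ e ≤ 2 ^ (3 : ℝ) := rpow_le_rpow_of_exponent_le one_le_two he
      _ = 8 := by norm_num
  exact mul_le_mul h2 (rpow_le_rpow_of_exponent_ge hμ0 hμ1 hae) (by positivity) (by norm_num)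

theorem stmt_9_general {n : ℕ} (D : Set (EuclideanSpace ℝ (Fin n)))
    (α g : EuclideanSpace ℝ (Fin n) → ℝ) (αm αp : ℝ) (hαm : 0 < αm) (hαp : αp < 1)
    (hα : ∀ x ∈ D, αm ≤ α x ∧ α x ≤ αp)
    (hbdd : BddAbove (wSemiSet2 D α g))
    (x₀ : EuclideanSpace ℝ (Fin n)) (hx₀ : x₀ ∈ D)
    (μ : ℝ) (hμ0 : 0 < μ) (hμ : μ ≤ 1 / 2)
    (d : ℝ) (hd : d = μ * Metric.infDist x₀ (frontier D))
    (B : Set (EuclideanSpace ℝ (Fin n))) (hB : B = Metric.ball x₀ d) :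
    ∀ x ∈ B, ∀ y ∈ B, x ≠ y →
      min (Metric.infDist x (frontier B)) (Metric.infDist y (frontier B)) ^ (α x + 2) *
          (|g x - g y| / ‖x - y‖ ^ α x) ≤
        8 * μ ^ (2 + αm) * sSup (wSemiSet2 D α g) := by
  intro x hx y hy hxy
  have : Nontrivial (EuclideanSpace ℝ (Fin n)) := nontrivial_of_ne x y hxy
  subst hB hd
  set r := infDist x₀ (frontier D)
  have hr : 0 ≤ r := infDist_nonneg
  have hμr : μ * r ≤ r / 2 := by nlinarith
  have hBD : ball x₀ (μ * r) ⊆ D :=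
    (ball_subset_ball (by linarith)).trans (ball_infDist_frontier_subset hx₀)
  have hfar : ∀ z ∈ ball x₀ (μ * r), r / 2 ≤ infDist z (frontier D) := fun z hz => by
    linarith [infDist_le_infDist_add_dist (x := x₀) (y := z) (s := frontier D), mem_ball'.1 hz]
  set mB := min (infDist x (frontier (ball x₀ (μ * r)))) (infDist y (frontier (ball x₀ (μ * r))))
  set mD := min (infDist x (frontier D)) (infDist y (frontier D))
  set Q := |g x - g y| / ‖x - y‖ ^ α x
  have hmB : 0 ≤ mB := le_min infDist_nonneg infDist_nonneg
  have hmD : 0 ≤ mD := le_min infDist_nonneg infDist_nonneg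
  have hweight : mB ≤ 2 * μ * mD := calc
    mB ≤ μ * r := min_le_of_left_le (infDist_frontier_ball_le hx)
    _ ≤ 2 * μ * mD := by nlinarith [le_min (hfar x hx) (hfar y hy)]
  have hQ : 0 ≤ Q := by positivity
  have hαx := hα x (hBD hx)
  have hmem : mD ^ (α x + 2) * Q ∈ wSemiSet2 D α g := ⟨x, hBD hx, y, hBD hy, hxy, rfl⟩
  calc mB ^ (α x + 2) * Q ≤ (2 * μ * mD) ^ (α x + 2) * Q := by
        gcongr
        linarith
    _ = (2 * μ) ^ (α x + 2) * (mD ^ (α x + 2) * Q) := by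
        rw [mul_rpow (by positivity) hmD]; ring
    _ ≤ 8 * μ ^ (2 + αm) * sSup (wSemiSet2 D α g) :=
        mul_le_mul (two_mul_rpow_le_eight_mul_rpow hμ0 (by linarith) (by linarith) (by linarith))
          (le_csSup hbdd hmem) (by positivity) (by positivity)

theorem stmt_9 {n : ℕ} (Ω D : Set (EuclideanSpace ℝ (Fin n)))
    (hΩo : IsOpen Ω) (hΩb : Bornology.IsBounded Ω) (hDo : IsOpen D) (hDΩ : D ⊆ Ω)
    (α g : EuclideanSpace ℝ (Fin n) → ℝ) (αm αp : ℝ) (hαm : 0 < αm) (hαp : αp < 1)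
    (hα : ∀ x ∈ D, αm ≤ α x ∧ α x ≤ αp)
    (hg : ContinuousOn g D) (hbdd : BddAbove (wSemiSet2 D α g))
    (x₀ : EuclideanSpace ℝ (Fin n)) (hx₀ : x₀ ∈ D)
    (μ : ℝ) (hμ0 : 0 < μ) (hμ : μ ≤ 1 / 2)
    (d : ℝ) (hd : d = μ * Metric.infDist x₀ (frontier D))
    (B : Set (EuclideanSpace ℝ (Fin n))) (hB : B = Metric.ball x₀ d) :
    ∀ x ∈ B, ∀ y ∈ B, x ≠ y →
      min (Metric.infDist x (frontier B)) (Metric.infDist y (frontier B)) ^ (α x + 2) *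
          (|g x - g y| / ‖x - y‖ ^ α x) ≤
        8 * μ ^ (2 + αm) * sSup (wSemiSet2 D α g) :=
  stmt_9_general D α g αm αp hαm hαp hα hbdd x₀ hx₀ μ hμ0 hμ d hd B hB
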